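/- Let ℓ and ℓ' be nonnegative integers with ℓ + ℓ' ≥ 1. Then the (ℓ+ℓ')-tuple ( 1/(ℓ+1), 2/(ℓ+1), ..., ℓ/(ℓ+1), 1/(ℓ'+1), 2/(ℓ'+1), ..., ℓ'/(ℓ'+1) ) belongs to (1/(ℓ+ℓ'+1)) · 𝒜_{ℓ+ℓ'}; equivalently, (ℓ+ℓ'+1) times this tuple lies in the convex hull of the permutations of (1, 2, ..., ℓ+ℓ'). -/

import Mathlib

/-! Interleaving the blocks `1, …, ℓ` and `1, …, ℓ'` into the positions `1, …, n = ℓ + ℓ'` in all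
possible ways and averaging the resulting permutation vectors gives the tuple in question: the
`i`-th smallest element of a uniformly random `ℓ`-subset of `{1, …, n}` has mean
`i (n + 1) / (ℓ + 1)`.
The proof is the induction behind this average. Conditioning on which block receives the largest
value `n` (the first with probability `ℓ / n`, the second with probability `ℓ' / n`) writes the
vector for `(ℓ, ℓ')` as a convex combination of the vectors for `(ℓ - 1, ℓ')` and `(ℓ, ℓ' - 1)`
with `n` inserted at the end of the corresponding block, and inserting the top value `n` at any
position maps `𝒜_{n-1}` into `𝒜_n`. -/

/-- `𝒜_r`: the convex hull in ℝ^r of the set of all permutations of the vector (1, 2, ..., r). -/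
def permsHull (r : ℕ) : Set (Fin r → ℝ) :=
  convexHull ℝ {v : Fin r → ℝ | ∃ σ : Equiv.Perm (Fin r), v = fun i => ((σ i : ℕ) : ℝ) + 1}

namespace Fin

lemma insertNth_apply_eq_ite {m : ℕ} {α : Type*} (p : Fin (m + 1)) (x : α) (f : ℕ → α)
    (i : Fin (m + 1)) :
    (insertNth p x (fun t : Fin m => f t) : Fin (m + 1) → α) i =
      if (i : ℕ) < p then f i else if (i : ℕ) = p then x else f (i - 1) := by
  rcases lt_trichotomy i p with h | rfl | h
  · simp [insertNth_apply_below h, lt_def.mp h]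
  · simp
  · have h' := lt_def.mp h
    simp [insertNth_apply_above h, h'.not_gt, h'.ne']

lemma insertNth_add_smul_add_smul {m : ℕ} {R M : Type*} [Semiring R] [AddCommMonoid M]
    [Module R M] (p : Fin (m + 1)) (x : M) (u v : Fin m → M) {a b : R} (hab : a + b = 1) :
    (insertNth p x (a • u + b • v) : Fin (m + 1) → M) =
      a • (insertNth p x u : Fin (m + 1) → M) + b • (insertNth p x v : Fin (m + 1) → M) := by
  ext i
  induction i using succAboveCases p with
  | x => simp [← add_smul, hab]
  | p t => simp

end Fin

def permVec {r : ℕ} (σ : Equiv.Perm (Fin r)) : Fin r → ℝ := fun i => ((σ i : ℕ) : ℝ) + 1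

lemma permVec_mem_permsHull {r : ℕ} (σ : Equiv.Perm (Fin r)) : permVec σ ∈ permsHull r :=
  subset_convexHull ℝ _ ⟨σ, rfl⟩

lemma insertNth_permVec {m : ℕ} (p : Fin (m + 1)) (σ : Equiv.Perm (Fin m)) :
    Fin.insertNth p ((m : ℝ) + 1) (permVec σ) =
      permVec ((finSuccEquiv' p).trans ((Equiv.optionCongr σ).trans
        (finSuccEquiv' (Fin.last m)).symm)) := by
  ext i
  induction i using Fin.succAboveCases p with
  | x => simp [permVec, finSuccEquiv'_at]
  | p t => simp [permVec, finSuccEquiv'_succAbove]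

lemma insertNth_mem_permsHull {m : ℕ} (p : Fin (m + 1)) {w : Fin m → ℝ}
    (hw : w ∈ permsHull m) : Fin.insertNth p ((m : ℝ) + 1) w ∈ permsHull (m + 1) := by
  refine convexHull_min ?_ ?_ hw (t := {w | Fin.insertNth p ((m : ℝ) + 1) w ∈ permsHull (m + 1)})
  · rintro _ ⟨σ, rfl⟩
    change Fin.insertNth p _ (permVec σ) ∈ permsHull (m + 1)
    rw [insertNth_permVec]
    exact permVec_mem_permsHull _
  · intro u hu v hv a b ha hb hab
    change Fin.insertNth p _ (a • u + b • v) ∈ permsHull (m + 1)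
    rw [Fin.insertNth_add_smul_add_smul p _ u v hab]
    exact convex_convexHull ℝ _ hu hv ha hb hab

lemma val_add_one_mem_permsHull (r : ℕ) : (fun i : Fin r => (i : ℝ) + 1) ∈ permsHull r :=
  permVec_mem_permsHull 1

/-- Coordinate `i` (counted from `0`) of the vector of the statement. -/
noncomputable def shuffleMean (l l' i : ℕ) : ℝ :=
  ((l : ℝ) + (l' : ℝ) + 1) *
    (if i < l then ((i : ℝ) + 1) / ((l : ℝ) + 1) else ((i - l + 1 : ℕ) : ℝ) / ((l' : ℝ) + 1))

lemma shuffleMean_of_lt {l i : ℕ} (l' : ℕ) (h : i < l) :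
    shuffleMean l l' i = (l + l' + 1) * (i + 1) / (l + 1) := by
  rw [shuffleMean, if_pos h, mul_div_assoc]

lemma shuffleMean_add (l l' d : ℕ) :
    shuffleMean l l' (l + d) = (l + l' + 1) * (d + 1) / (l' + 1) := by
  rw [shuffleMean, if_neg (by omega), Nat.add_sub_cancel_left, mul_div_assoc]
  push_cast; ring

lemma shuffleMean_zero_right {l i : ℕ} (h : i < l) : shuffleMean l 0 i = i + 1 := by
  rw [shuffleMean_of_lt 0 h]
  field_simp
  ring

lemma shuffleMean_zero_left (l' d : ℕ) : shuffleMean 0 l' d = d + 1 := by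
  simpa [mul_div_cancel_left₀ _ (Nat.cast_add_one_ne_zero (R := ℝ) l')]
    using shuffleMean_add 0 l' d

lemma shuffleMean_succ_succ (k j i : ℕ) (hi : i < k + j + 2) :
    shuffleMean (k + 1) (j + 1) i =
      (k + 1) / (k + j + 2) *
          (if i < k then shuffleMean k (j + 1) i
            else if i = k then ((k + j + 1 : ℕ) : ℝ) + 1 else shuffleMean k (j + 1) (i - 1)) +
        (j + 1) / (k + j + 2) *
          (if i < k + j + 1 then shuffleMean (k + 1) j i
            else if i = k + j + 1 then ((k + j + 1 : ℕ) : ℝ) + 1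
            else shuffleMean (k + 1) j (i - 1)) := by
  rcases lt_or_ge i (k + 1) with hik | hik
  · rw [if_pos (show i < k + j + 1 by omega), shuffleMean_of_lt _ hik,
      shuffleMean_of_lt _ (show i < k + 1 from hik)]
    rcases lt_or_eq_of_le (Nat.le_of_lt_succ hik) with hik | rfl
    · rw [if_pos hik, shuffleMean_of_lt _ hik]
      push_cast; field_simp; ring
    · rw [if_neg (lt_irrefl _), if_pos rfl]
      push_cast; field_simp; ring
  · obtain ⟨d, rfl⟩ := Nat.exists_eq_add_of_le hik
    rw [if_neg (show ¬ k + 1 + d < k by omega), if_neg (show k + 1 + d ≠ k by omega),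
      show k + 1 + d - 1 = k + d by omega, shuffleMean_add, shuffleMean_add]
    rcases lt_or_eq_of_le (show d ≤ j by omega) with hdj | rfl
    · rw [if_pos (show k + 1 + d < k + j + 1 by omega), shuffleMean_add]
      push_cast; field_simp; ring
    · rw [if_neg (show ¬ k + 1 + d < k + d + 1 by omega),
        if_pos (show k + 1 + d = k + d + 1 by omega)]
      push_cast; field_simp; ring

lemma shuffleMean_mem_permsHull (n l l' : ℕ) (h : l + l' = n) :
    (fun i : Fin n => shuffleMean l l' i) ∈ permsHull n := by
  induction n generalizing l l' with
  | zero =>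
    obtain rfl : l = 0 := by omega
    simpa only [shuffleMean_zero_left] using val_add_one_mem_permsHull 0
  | succ n ih =>
    rcases l with _ | k
    · simpa only [shuffleMean_zero_left] using val_add_one_mem_permsHull (n + 1)
    rcases l' with _ | j
    · simpa only [shuffleMean_zero_right (Fin.isLt _ |>.trans_eq h.symm)]
        using val_add_one_mem_permsHull (n + 1)
    obtain rfl : n = k + j + 1 := by omega
    have hsplit : (fun i : Fin (k + j + 1 + 1) => shuffleMean (k + 1) (j + 1) i) =
        ((k + 1) / (k + j + 2) : ℝ) • Fin.insertNth ⟨k, by omega⟩ (((k + j + 1 : ℕ) : ℝ) + 1)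
            (fun t : Fin (k + j + 1) => shuffleMean k (j + 1) t) +
          ((j + 1) / (k + j + 2) : ℝ) • Fin.insertNth (Fin.last _) (((k + j + 1 : ℕ) : ℝ) + 1)
            (fun t : Fin (k + j + 1) => shuffleMean (k + 1) j t) := by
      ext i
      simp only [Pi.add_apply, Pi.smul_apply, smul_eq_mul, Fin.insertNth_apply_eq_ite,
        Fin.val_last]
      exact shuffleMean_succ_succ k j i i.isLt
    rw [hsplit]
    refine convex_convexHull ℝ _ (insertNth_mem_permsHull _ (ih k (j + 1) (by omega)))
      (insertNth_mem_permsHull _ (ih (k + 1) j (by omega))) (by positivity) (by positivity) ?_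
    field_simp
    ring

theorem stmt_13 (l l' : ℕ) :
    (fun i : Fin (l + l') =>
        ((l : ℝ) + (l' : ℝ) + 1) *
          (if (i : ℕ) < l then ((i : ℕ) + 1 : ℝ) / ((l : ℝ) + 1)
           else (((i : ℕ) - l + 1 : ℕ) : ℝ) / ((l' : ℝ) + 1)))
      ∈ permsHull (l + l') :=
  shuffleMean_mem_permsHull (l + l') l l' rfl
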